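/- arXiv:2504.17905 — 2 statements merged into one kernel-verified Lean document; each statement's English description precedes it below -/
import Mathlib

section
/- For real k with 1 < k < 2, and real numbers a_j, b_j ≥ 0 and q_v ≥ 0 such that for some index v either (∏_{j≤v} a_j^k b_j^{2−k})·q_v² ≥ c > 0 (with q_v ≥ 1) or ∏_{j≤R} a_j^k b_j^{2−k} ≥ c > 0 holds, one has (∑_{v=0}^R (∏_{j≤v} a_j) q_v²)^{k/2} · (∑_{v=0}^R (∏_{j≤v} b_j) q_v²)^{(2−k)/2} ≥ c', where c' > 0 depends only on c and k. (This is the key pointwise inequality, via Hölder's inequality with exponents 2/k and 2/(2−k), used in the upper bounds principle.) -/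
/-! Keeping only the `v`-th terms of the two sums and using that `x ^ (k/2) * y ^ ((2-k)/2)`
is monotone in `x, y` and homogeneous of degree one, the left side is at least
`√(A ^ k * B ^ (2-k)) * q²` with `A, B` the partial products at `v` and `q = q (v+1) ≥ 1`;
since `q² ≥ q = √(q²)`, this is at least `√c`. -/

namespace Real

lemma rpow_div_two_mul_rpow_div_two_eq_sqrt {x y : ℝ} (k : ℝ) (hx : 0 ≤ x) (hy : 0 ≤ y) :
    x ^ (k / 2) * y ^ ((2 - k) / 2) = √(x ^ k * y ^ (2 - k)) := by
  rw [sqrt_eq_rpow, mul_rpow (rpow_nonneg hx _) (rpow_nonneg hy _), ← rpow_mul hx,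
    ← rpow_mul hy]
  ring_nf

lemma mul_rpow_div_two_mul_mul_rpow_div_two {x y t : ℝ} (k : ℝ) (hx : 0 ≤ x) (hy : 0 ≤ y)
    (ht : 0 ≤ t) :
    (x * t) ^ (k / 2) * (y * t) ^ ((2 - k) / 2) = x ^ (k / 2) * y ^ ((2 - k) / 2) * t := by
  have ht_pow : t ^ (k / 2) * t ^ ((2 - k) / 2) = t := by
    rw [← rpow_add' ht (by ring_nf; norm_num)]
    ring_nf
    exact rpow_one t
  rw [mul_rpow hx ht, mul_rpow hy ht]
  linear_combination x ^ (k / 2) * y ^ ((2 - k) / 2) * ht_pow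

lemma sqrt_le_sum_rpow_mul_sum_rpow {ι : Type*} {s : Finset ι} {x y w : ι → ℝ} {k c : ℝ}
    (hk0 : 0 ≤ k) (hk2 : k ≤ 2) (hx : ∀ j, 0 ≤ x j) (hy : ∀ j, 0 ≤ y j) (hw : ∀ j, 0 ≤ w j)
    {i : ι} (hi : i ∈ s) (hwi : 1 ≤ w i) (hc : c ≤ x i ^ k * y i ^ (2 - k) * w i) :
    √c ≤ (∑ j ∈ s, x j * w j) ^ (k / 2) * (∑ j ∈ s, y j * w j) ^ ((2 - k) / 2) := by
  have hxw_le : x i * w i ≤ ∑ j ∈ s, x j * w j :=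
    Finset.single_le_sum (fun j _ ↦ mul_nonneg (hx j) (hw j)) hi
  have hyw_le : y i * w i ≤ ∑ j ∈ s, y j * w j :=
    Finset.single_le_sum (fun j _ ↦ mul_nonneg (hy j) (hw j)) hi
  have hxw := mul_nonneg (hx i) (hw i)
  have hyw := mul_nonneg (hy i) (hw i)
  calc √c ≤ √(x i ^ k * y i ^ (2 - k) * w i) := sqrt_le_sqrt hc
    _ = √(x i ^ k * y i ^ (2 - k)) * √(w i) :=
        sqrt_mul (mul_nonneg (rpow_nonneg (hx i) _) (rpow_nonneg (hy i) _)) _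
    _ ≤ √(x i ^ k * y i ^ (2 - k)) * w i := by
        gcongr
        exact sqrt_le_self_iff.mpr (Or.inr hwi)
    _ = (x i * w i) ^ (k / 2) * (y i * w i) ^ ((2 - k) / 2) := by
        rw [mul_rpow_div_two_mul_mul_rpow_div_two k (hx i) (hy i) (hw i),
          rpow_div_two_mul_rpow_div_two_eq_sqrt k (hx i) (hy i)]
    _ ≤ (∑ j ∈ s, x j * w j) ^ (k / 2) * (∑ j ∈ s, y j * w j) ^ ((2 - k) / 2) := by
        gcongr
        exact rpow_nonneg (hxw.trans hxw_le) _

end Real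

/-- The key pointwise inequality (via Hölder with exponents `2/k` and `2/(2−k)`)
in the upper bounds principle: if for some `v ≤ R` either
`(∏_{j≤v} a_j^k b_j^{2−k})·q_{v+1}² ≥ c` with `q_{v+1} ≥ 1`, or
`∏_{j≤R} a_j^k b_j^{2−k} ≥ c` (with `q_{R+1} = 1`), then
`(∑_v (∏_{j≤v} a_j) q_{v+1}²)^{k/2} (∑_v (∏_{j≤v} b_j) q_{v+1}²)^{(2−k)/2} ≥ c'`,
with `c' > 0` depending only on `c` and `k`. -/
theorem stmt_6 (k c : ℝ) (hk1 : 1 < k) (hk2 : k < 2) (hc : 0 < c) :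
    ∃ c' > (0 : ℝ), ∀ (R : ℕ) (a b q : ℕ → ℝ),
      (∀ j, 0 ≤ a j) → (∀ j, 0 ≤ b j) → (∀ v, 0 ≤ q v) → q (R + 1) = 1 →
      ((∃ v ≤ R, 1 ≤ q (v + 1) ∧
          c ≤ (∏ j ∈ Finset.range v, (a j) ^ k * (b j) ^ (2 - k)) * (q (v + 1)) ^ 2) ∨
        c ≤ ∏ j ∈ Finset.range R, (a j) ^ k * (b j) ^ (2 - k)) →
      c' ≤ (∑ v ∈ Finset.range (R + 1),
              (∏ j ∈ Finset.range v, a j) * (q (v + 1)) ^ 2) ^ (k / 2) *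
           (∑ v ∈ Finset.range (R + 1),
              (∏ j ∈ Finset.range v, b j) * (q (v + 1)) ^ 2) ^ ((2 - k) / 2) := by
  refine ⟨√c, Real.sqrt_pos.mpr hc, fun R a b q ha hb hq hqR h ↦ ?_⟩
  obtain ⟨v, hvR, hqv, hcv⟩ : ∃ v ≤ R, 1 ≤ q (v + 1) ∧
      c ≤ (∏ j ∈ Finset.range v, (a j) ^ k * (b j) ^ (2 - k)) * (q (v + 1)) ^ 2 := by
    rcases h with h | h
    · exact h
    · exact ⟨R, le_rfl, hqR.ge, by simpa [hqR] using h⟩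
  rw [Finset.prod_mul_distrib, Real.finsetProd_rpow _ _ fun j _ ↦ ha j,
    Real.finsetProd_rpow _ _ fun j _ ↦ hb j] at hcv
  exact Real.sqrt_le_sum_rpow_mul_sum_rpow (by linarith) hk2.le
    (fun _ ↦ Finset.prod_nonneg fun j _ ↦ ha j) (fun _ ↦ Finset.prod_nonneg fun j _ ↦ hb j)
    (fun _ ↦ sq_nonneg _) (Finset.mem_range.mpr (Nat.lt_succ_of_le hvR)) (one_le_pow₀ hqv) hcv
end

section
/- For a prime p and real c with |c| < 1, ∑_{a,b ≥ 0} p^{min(a,b)−a−b} τ_0(p^{a−min(a,b)}) τ_0(p^{b−min(a,b)}) c^{a+b}/(a! b!) = 1 + (4c + c²)/p + O(1/p²), where the implied constant is absolute. -/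
/-!
Since `τ₀(p^ν) = 1 + ν (p - 1)/(p + 1) ≤ 2^ν`, the term indexed by `(a, b)` is bounded by
`p^{-max(a,b)} · 2^a/a! · 2^b/b!`. The terms with `max(a, b) ≥ 2` therefore contribute at most
`e⁴/p²`, while the four terms with `a, b ≤ 1` add up exactly to `1 + 4c/(p + 1) + c²/p`,
because `τ₀(p) = 2p/(p + 1)`; this differs from `1 + (4c + c²)/p` by `4c/(p(p + 1))`.
-/

noncomputable def tauZero (l : ℕ) : ℝ :=
  ∏ p ∈ l.primeFactors,
    (1 + (l.factorization p : ℝ) * (1 - 1 / (p : ℝ)) / (1 + 1 / (p : ℝ)))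

open Finset Nat Real

@[simp]
lemma tauZero_one : tauZero 1 = 1 := by
  simp [tauZero]

lemma tauZero_prime_pow {p : ℕ} (hp : p.Prime) (ν : ℕ) :
    tauZero (p ^ ν) = 1 + ν * ((p - 1) / (p + 1)) := by
  have hp0 : (p : ℝ) ≠ 0 := by exact_mod_cast hp.ne_zero
  rcases Nat.eq_zero_or_pos ν with rfl | hν
  · simp
  · rw [tauZero, Nat.primeFactors_prime_pow hν.ne' hp, Nat.Prime.factorization_pow hp,
      Finset.prod_singleton, Finsupp.single_eq_same]
    field_simp

lemma tauZero_prime {p : ℕ} (hp : p.Prime) : tauZero p = 2 * p / (p + 1) := by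
  have hp1 : (p : ℝ) + 1 ≠ 0 := by positivity
  have h := tauZero_prime_pow hp 1
  rw [pow_one, Nat.cast_one, one_mul] at h
  rw [h]
  field_simp
  ring

lemma tauZero_prime_pow_nonneg {p : ℕ} (hp : p.Prime) (ν : ℕ) : 0 ≤ tauZero (p ^ ν) := by
  have : (1 : ℝ) ≤ p := by exact_mod_cast hp.one_lt.le
  rw [tauZero_prime_pow hp]
  have : 0 ≤ ((p : ℝ) - 1) / (p + 1) := by apply div_nonneg <;> linarith
  positivity

lemma tauZero_prime_pow_le_two_pow {p : ℕ} (hp : p.Prime) (ν : ℕ) : tauZero (p ^ ν) ≤ 2 ^ ν := by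
  have : ((p : ℝ) - 1) / (p + 1) ≤ 1 := by rw [div_le_one (by positivity)]; linarith
  calc tauZero (p ^ ν) ≤ 1 + ν * 1 := by rw [tauZero_prime_pow hp]; gcongr
    _ ≤ (1 + 1) ^ ν := one_add_mul_le_pow (by norm_num) ν
    _ = 2 ^ ν := by norm_num

lemma pow_min_div_pow_add {K : Type*} [Field K] {x : K} (hx : x ≠ 0) (a b : ℕ) :
    x ^ min a b / x ^ (a + b) = x⁻¹ ^ max a b := by
  rw [← min_add_max a b, pow_add, div_mul_cancel_left₀ (pow_ne_zero _ hx), inv_pow]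

lemma abs_tsum_sub_sum_le {ι : Type*} {f g : ι → ℝ} {s : Finset ι} {A : ℝ} (hf : Summable f)
    (hg : HasSum g A) (hg0 : 0 ≤ g) (hfg : ∀ x ∉ s, |f x| ≤ g x) :
    |∑' x, f x - ∑ x ∈ s, f x| ≤ A := by
  rw [← hf.sum_add_tsum_compl (s := s), add_sub_cancel_left, _root_.tsum_subtype,
    ← Real.norm_eq_abs]
  refine tsum_of_norm_bounded hg fun x => ?_
  by_cases hx : x ∈ s
  · simpa [hx] using hg0 x
  · simpa [hx] using hfg x hx

lemma hasSum_pow_div_factorial_mul (x y : ℝ) :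
    HasSum (fun ab : ℕ × ℕ => x ^ ab.1 / ab.1 ! * (y ^ ab.2 / ab.2 !)) (exp (x + y)) := by
  have hexp (z : ℝ) : HasSum (fun n : ℕ => z ^ n / (n ! : ℝ)) (exp z) := by
    rw [exp_eq_exp_ℝ]
    exact NormedSpace.expSeries_div_hasSum_exp z
  rw [exp_add]
  exact (hexp x).mul (hexp y) <| summable_mul_of_summable_norm
    (f := fun n : ℕ => x ^ n / (n ! : ℝ)) (g := fun n : ℕ => y ^ n / (n ! : ℝ))
    (Real.summable_pow_div_factorial x).norm (Real.summable_pow_div_factorial y).norm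

noncomputable def localFactorTerm (p : ℕ) (c : ℝ) (ab : ℕ × ℕ) : ℝ :=
  ((p : ℝ) ^ (min ab.1 ab.2) / (p : ℝ) ^ (ab.1 + ab.2)) *
    tauZero (p ^ (ab.1 - min ab.1 ab.2)) * tauZero (p ^ (ab.2 - min ab.1 ab.2)) *
    c ^ (ab.1 + ab.2) / ((ab.1.factorial : ℝ) * (ab.2.factorial : ℝ))

section LocalFactor

variable {p : ℕ} {c : ℝ}

lemma abs_localFactorTerm_le (hp : p.Prime) (hc : |c| ≤ 1) (a b : ℕ) :
    |localFactorTerm p c (a, b)| ≤ (p : ℝ)⁻¹ ^ max a b * (2 ^ a / a ! * (2 ^ b / b !)) := by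
  have hp0 : (p : ℝ) ≠ 0 := by exact_mod_cast hp.ne_zero
  have hτa := tauZero_prime_pow_nonneg hp (a - min a b)
  have hτb := tauZero_prime_pow_nonneg hp (b - min a b)
  calc |localFactorTerm p c (a, b)|
      = (p : ℝ)⁻¹ ^ max a b * tauZero (p ^ (a - min a b)) * tauZero (p ^ (b - min a b)) *
          |c| ^ (a + b) / (a ! * b !) := by
        rw [localFactorTerm, pow_min_div_pow_add hp0, abs_div, abs_mul, abs_mul, abs_mul,
          abs_pow, abs_pow, abs_inv, Nat.abs_cast, abs_of_nonneg hτa, abs_of_nonneg hτb,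
          abs_of_nonneg (by positivity : (0 : ℝ) ≤ a ! * b !)]
    _ ≤ (p : ℝ)⁻¹ ^ max a b * 2 ^ a * 2 ^ b * 1 / (a ! * b !) := by
        gcongr
        · exact (tauZero_prime_pow_le_two_pow hp _).trans
            (pow_le_pow_right₀ one_le_two (Nat.sub_le _ _))
        · exact (tauZero_prime_pow_le_two_pow hp _).trans
            (pow_le_pow_right₀ one_le_two (Nat.sub_le _ _))
        · exact pow_le_one₀ (abs_nonneg c) hc
    _ = (p : ℝ)⁻¹ ^ max a b * (2 ^ a / a ! * (2 ^ b / b !)) := by ring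

lemma summable_localFactorTerm (hp : p.Prime) (hc : |c| ≤ 1) :
    Summable (localFactorTerm p c) := by
  have hp1 : (p : ℝ)⁻¹ ≤ 1 := inv_le_one_of_one_le₀ (by exact_mod_cast hp.one_lt.le)
  refine Summable.of_norm_bounded (hasSum_pow_div_factorial_mul 2 2).summable ?_
  rintro ⟨a, b⟩
  refine (abs_localFactorTerm_le hp hc a b).trans (mul_le_of_le_one_left (by positivity) ?_)
  exact pow_le_one₀ (by positivity) hp1

lemma sum_localFactorTerm_range_two (hp : p.Prime) :
    ∑ ab ∈ range 2 ×ˢ range 2, localFactorTerm p c ab = 1 + 4 * c / (p + 1) + c ^ 2 / p := by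
  have hp0 : (p : ℝ) ≠ 0 := by exact_mod_cast hp.ne_zero
  have hp1 : (p : ℝ) + 1 ≠ 0 := by positivity
  simp [sum_product, sum_range_succ, localFactorTerm, tauZero_prime hp]
  field_simp
  ring

lemma abs_sum_localFactorTerm_range_two_sub_le (hp : p.Prime) (hc : |c| ≤ 1) :
    |∑ ab ∈ range 2 ×ˢ range 2, localFactorTerm p c ab - (1 + (4 * c + c ^ 2) / p)| ≤
      4 / (p : ℝ) ^ 2 := by
  have hp0 : (0 : ℝ) < p := by exact_mod_cast hp.pos
  have key : ∑ ab ∈ range 2 ×ˢ range 2, localFactorTerm p c ab - (1 + (4 * c + c ^ 2) / p) =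
      -(4 * c) / (p * (p + 1)) := by
    rw [sum_localFactorTerm_range_two hp]
    field_simp
    ring
  rw [key, abs_div, abs_neg, abs_mul, abs_of_pos (four_pos : (0 : ℝ) < 4),
    abs_of_pos (by positivity : (0 : ℝ) < p * (p + 1))]
  calc 4 * |c| / (p * (p + 1)) ≤ 4 * 1 / (p * p) := by
        gcongr
        linarith
    _ = 4 / p ^ 2 := by ring

lemma abs_tsum_localFactorTerm_sub_sum_le (hp : p.Prime) (hc : |c| ≤ 1) :
    |∑' ab, localFactorTerm p c ab -
        ∑ ab ∈ range 2 ×ˢ range 2, localFactorTerm p c ab| ≤ exp 4 / p ^ 2 := by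
  have hp1 : (p : ℝ)⁻¹ ≤ 1 := inv_le_one_of_one_le₀ (by exact_mod_cast hp.one_lt.le)
  have hmajorant := (hasSum_pow_div_factorial_mul 2 2).mul_left ((p : ℝ)⁻¹ ^ 2)
  rw [show (p : ℝ)⁻¹ ^ 2 * exp (2 + 2) = exp 4 / p ^ 2 by norm_num [div_eq_inv_mul]] at hmajorant
  refine abs_tsum_sub_sum_le (summable_localFactorTerm hp hc) hmajorant
    (fun _ => by positivity) ?_
  rintro ⟨a, b⟩ hab
  have hmax : 2 ≤ max a b := by
    simp only [mem_product, mem_range, not_and_or, not_lt] at hab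
    omega
  exact (abs_localFactorTerm_le hp hc a b).trans <| mul_le_mul_of_nonneg_right
    (pow_le_pow_of_le_one (by positivity) hp1 hmax) (by positivity)

end LocalFactor

/-- The local factor of the mollified fourth moment Euler product satisfies
`∑_{a,b ≥ 0} p^{min(a,b)−a−b} τ_0(p^{a−min}) τ_0(p^{b−min}) c^{a+b}/(a!b!)
 = 1 + (4c + c²)/p + O(1/p²)`, with an absolute implied constant. -/
theorem stmt_9 :
    ∃ C > (0 : ℝ), ∀ (p : ℕ), p.Prime → ∀ c : ℝ, |c| < 1 →
      |(∑' ab : ℕ × ℕ,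
          ((p : ℝ) ^ (min ab.1 ab.2) / (p : ℝ) ^ (ab.1 + ab.2)) *
            tauZero (p ^ (ab.1 - min ab.1 ab.2)) * tauZero (p ^ (ab.2 - min ab.1 ab.2)) *
            c ^ (ab.1 + ab.2) / ((ab.1.factorial : ℝ) * (ab.2.factorial : ℝ))) -
         (1 + (4 * c + c ^ 2) / (p : ℝ))| ≤ C / (p : ℝ) ^ 2 := by
  refine ⟨exp 4 + 4, by positivity, fun p hp c hc => ?_⟩
  set S := ∑ ab ∈ range 2 ×ˢ range 2, localFactorTerm p c ab
  calc |∑' ab, localFactorTerm p c ab - (1 + (4 * c + c ^ 2) / p)|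
      ≤ |∑' ab, localFactorTerm p c ab - S| + |S - (1 + (4 * c + c ^ 2) / p)| :=
        abs_sub_le _ _ _
    _ ≤ exp 4 / p ^ 2 + 4 / p ^ 2 :=
        add_le_add (abs_tsum_localFactorTerm_sub_sum_le hp hc.le)
          (abs_sum_localFactorTerm_range_two_sub_le hp hc.le)
    _ = (exp 4 + 4) / p ^ 2 := by ring
end
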